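/- arXiv:math/9912021 — 4 statements merged into one kernel-verified Lean document; each statement's English description precedes it below -/
import Mathlib

section
/- In the adjoint group of a split semisimple Lie algebra of rank l with Cartan subalgebra h, an element exp(x + √-1 y) with x, y ∈ h has all values exp(⟨α_i, x + √-1 y⟩) real for every simple root α_i if and only if y = Σ_{i=1}^l k_i y_i with each k_i ∈ ℤ, where y_i = 2π m°_{α_i}/(α_i, α_i) and m°_{α_i} is the element of h representing the i-th fundamental weight via the Killing form. -/
lemma exp_aux_re (a b : ℝ) :
    (Complex.exp ((a : ℂ) + Complex.I * (b : ℂ))).re = Real.exp a * Real.cos b := by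
  rw [Complex.exp_re]
  congr 1
  · congr 1; simp
  · congr 1; simp

lemma exp_aux_im (a b : ℝ) :
    (Complex.exp ((a : ℂ) + Complex.I * (b : ℂ))).im = Real.exp a * Real.sin b := by
  rw [Complex.exp_im]
  congr 1
  · congr 1; simp
  · congr 1; simp

/-- In the split Cartan subalgebra `h` (modelled as a real vector space `V`
with the simple roots `α_i` as linear functionals separating points, and the elements
`y_i = 2π m°_{α_i}/(α_i,α_i)` characterized by `α_j(y_i) = π δ_{ij}`), the values
`exp(⟨α_j, x + √-1 y⟩)` are all real for every simple root `α_j` if and only if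
`y = Σ_i k_i y_i` with each `k_i ∈ ℤ`. -/
theorem stmt4 (l : ℕ) (V : Type*) [AddCommGroup V] [Module ℝ V]
    (α : Fin l → (V →ₗ[ℝ] ℝ)) (yv : Fin l → V)
    (hpair : ∀ i j, α j (yv i) = if i = j then Real.pi else 0)
    (hsep : ∀ v : V, (∀ j, α j v = 0) → v = 0)
    (x y : V) :
    (∀ j : Fin l, ∃ r : ℝ,
        Complex.exp (((α j x : ℝ) : ℂ) + Complex.I * ((α j y : ℝ) : ℂ)) = (r : ℂ)) ↔
    (∃ k : Fin l → ℤ, y = ∑ i, (k i : ℝ) • yv i) := by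
  constructor
  · intro h
    have hsin : ∀ j, ∃ n : ℤ, (n : ℝ) * Real.pi = α j y := by
      intro j
      obtain ⟨r, hr⟩ := h j
      have him : (Complex.exp (((α j x : ℝ) : ℂ) + Complex.I * ((α j y : ℝ) : ℂ))).im = 0 := by
        rw [hr]; simp
      rw [exp_aux_im] at him
      have := (Real.exp_pos (α j x)).ne'
      have hs : Real.sin (α j y) = 0 := by
        rcases mul_eq_zero.mp him with h' | h'
        · exact absurd h' this
        · exact h'
      exact Real.sin_eq_zero_iff.mp hs
    choose k hk using hsin
    refine ⟨k, ?_⟩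
    have hz : y - ∑ i, (k i : ℝ) • yv i = 0 := by
      apply hsep
      intro j
      simp only [map_sub, map_sum, map_smul, hpair, smul_eq_mul]
      rw [Finset.sum_eq_single j]
      · simp [← hk j, mul_comm]
      · intro i _ hij; simp [hij]
      · intro hj; exact absurd (Finset.mem_univ j) hj
    exact sub_eq_zero.mp hz
  · intro ⟨k, hk⟩ j
    have hv : α j y = (k j : ℝ) * Real.pi := by
      rw [hk]
      simp only [map_sum, map_smul, smul_eq_mul, hpair]
      rw [Finset.sum_eq_single j]
      · simp
      · intro i _ hij; simp [hij]
      · intro hj; exact absurd (Finset.mem_univ j) hj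
    refine ⟨Real.exp (α j x) * Real.cos (α j y), ?_⟩
    apply Complex.ext
    · rw [exp_aux_re, hv, Complex.ofReal_re]
    · rw [exp_aux_im, hv, Real.sin_int_mul_pi, mul_zero, Complex.ofReal_im]
end

section
/- For G = Ad(SL(n,ℝ)), the group G̃ = {g ∈ Ad(SL(n,ℂ)) : Ad(g) preserves sl(n,ℝ)} is isomorphic to SL(n,ℝ) if n is odd, and to Ad(SL(n,ℝ)^±) (the image of real matrices of determinant ±1 under Ad) if n is even. In particular G̃ is disconnected when n is even. -/
/-!
If `Ad g` preserves `sl(n,ℝ)`, then so does `Ad ḡ` (entrywise conjugate) and the two agree there,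
so `ḡ⁻¹ g` commutes with `sl(n,ℝ)` and is a scalar `a`. Taking determinants gives `aⁿ = 1`, so
`|a| = 1`, and for `w² = a` the matrix `w⁻¹ g` is real, of determinant `±1`. For odd `n` the
sign is absorbed by `-1`. For even `n` it is an invariant: two real forms of `g` differ by a
real scalar `r`, which multiplies the determinant by `rⁿ ≥ 0`.
-/

/-- `g` (a unit of the complex `n×n` matrices) acts on `sl(n,ℝ)` by `Ad`:
conjugation of every real traceless matrix stays real. -/
def AdPreservesReal (n : ℕ) (g : (Matrix (Fin n) (Fin n) ℂ)ˣ) : Prop :=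
  ∀ X : Matrix (Fin n) (Fin n) ℝ, Matrix.trace X = 0 →
    ∃ Y : Matrix (Fin n) (Fin n) ℝ,
      (g : Matrix (Fin n) (Fin n) ℂ) * X.map Complex.ofReal *
          ((g⁻¹ : (Matrix (Fin n) (Fin n) ℂ)ˣ) : Matrix (Fin n) (Fin n) ℂ)
        = Y.map Complex.ofReal

/-- `g` is, up to a complex scalar, a real matrix with determinant in the
given set of allowed determinants. -/
def IsScalarTimesReal (n : ℕ) (g : (Matrix (Fin n) (Fin n) ℂ)ˣ) (dets : Set ℝ) : Prop :=
  ∃ (c : ℂ) (B : Matrix (Fin n) (Fin n) ℝ), B.det ∈ dets ∧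
    (g : Matrix (Fin n) (Fin n) ℂ) = c • B.map Complex.ofReal

open Matrix Complex

section RealMatrices

variable {m l : Type*}

lemma Matrix.map_ofReal_map_conj (B : Matrix m l ℝ) :
    (B.map ofReal).map (starRingEnd ℂ) = B.map ofReal := by
  ext i j
  simp

lemma Matrix.map_ofReal_mul {k : Type*} [Fintype l] (A : Matrix m l ℝ) (B : Matrix l k ℝ) :
    (A * B).map ofReal = A.map ofReal * B.map ofReal :=
  Matrix.map_mul (f := ofRealHom)

lemma Matrix.exists_map_ofReal_eq_of_map_conj_eq {M : Matrix m l ℂ}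
    (h : M.map (starRingEnd ℂ) = M) : ∃ B : Matrix m l ℝ, B.map ofReal = M :=
  ⟨M.map re, by ext i j; exact conj_eq_iff_re.mp (congrFun (congrFun h i) j)⟩

lemma Matrix.exists_eq_smul_map_ofReal_of_eq_smul_map_conj {M : Matrix m l ℂ} {a : ℂ}
    (ha : ‖a‖ = 1) (h : M = a • M.map (starRingEnd ℂ)) :
    ∃ w : ℂ, ‖w‖ = 1 ∧ ∃ B : Matrix m l ℝ, M = w • B.map ofReal := by
  obtain ⟨w, hw⟩ := IsAlgClosed.exists_eq_mul_self a
  have hw1 : ‖w‖ = 1 := by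
    rwa [hw, ← sq, norm_pow, pow_eq_one_iff_of_nonneg (norm_nonneg w) two_ne_zero] at ha
  have hw0 : w ≠ 0 := norm_ne_zero_iff.mp (by simp [hw1])
  have hconj : M.map (starRingEnd ℂ) = (w⁻¹ * w⁻¹) • M := by
    conv_rhs => rw [h, smul_smul, hw, ← mul_inv, inv_mul_cancel₀ (mul_ne_zero hw0 hw0), one_smul]
  obtain ⟨B, hB⟩ : ∃ B : Matrix m l ℝ, B.map ofReal = w⁻¹ • M := by
    refine exists_map_ofReal_eq_of_map_conj_eq ?_
    ext i j
    have := congrFun (congrFun hconj i) j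
    simp only [map_apply, smul_apply, smul_eq_mul] at this ⊢
    rw [map_mul, this, map_inv₀, ← inv_eq_conj hw1, inv_inv]
    field_simp
  exact ⟨w, hw1, B, by rw [hB, smul_smul, mul_inv_cancel₀ hw0, one_smul]⟩

end RealMatrices

section SquareMatrices

variable {n : Type*} [Fintype n] [DecidableEq n]

lemma Matrix.det_map_ofReal (B : Matrix n n ℝ) :
    (B.map ofReal).det = B.det :=
  (ofRealHom.map_det B).symm

lemma Matrix.eq_smul_one_of_forall_traceless_commute {M : Matrix n n ℂ}
    (h : ∀ X : Matrix n n ℝ, X.trace = 0 → M * X.map ofReal = X.map ofReal * M) :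
    ∃ a : ℂ, M = a • 1 := by
  have hcomm : Pairwise fun i j : n => Commute (single i j 1) M := fun i j hij => by
    have hmap : (single i j (1 : ℝ)).map ofReal = single i j 1 := by
      ext k l
      simp only [map_apply, single_apply]
      split_ifs <;> simp
    have := h (single i j 1) (trace_single_eq_of_ne i j 1 hij)
    rw [hmap] at this
    exact this.symm
  obtain ⟨a, ha⟩ := mem_range_scalar_of_commute_single hcomm
  exact ⟨a, by rw [← ha, smul_one_eq_diagonal, scalar_apply]⟩

end SquareMatrices

section SpecialLinear

variable {n : ℕ}

lemma adPreservesReal_of_eq_smul_map_ofReal (g : (Matrix (Fin n) (Fin n) ℂ)ˣ) (c : ℂ)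
    (B : Matrix (Fin n) (Fin n) ℝ) (hB : IsUnit B.det)
    (hg : (g : Matrix (Fin n) (Fin n) ℂ) = c • B.map ofReal) :
    AdPreservesReal n g := by
  intro X _
  refine ⟨B * X * B⁻¹, ?_⟩
  have hcomm : (g : Matrix (Fin n) (Fin n) ℂ) * X.map ofReal = (B * X * B⁻¹).map ofReal * g := by
    rw [hg, smul_mul_assoc, mul_smul_comm, ← map_ofReal_mul, ← map_ofReal_mul,
      Matrix.mul_assoc (B * X), nonsing_inv_mul _ hB, Matrix.mul_one]
  rw [hcomm, Matrix.mul_assoc, Units.mul_inv, Matrix.mul_one]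

lemma exists_eq_smul_map_conj_of_adPreservesReal {g : (Matrix (Fin n) (Fin n) ℂ)ˣ}
    (h : AdPreservesReal n g) :
    ∃ a : ℂ, (g : Matrix (Fin n) (Fin n) ℂ) =
      a • (g : Matrix (Fin n) (Fin n) ℂ).map (starRingEnd ℂ) := by
  set σ := (starRingEnd ℂ).mapMatrix (m := Fin n)
  set G : Matrix (Fin n) (Fin n) ℂ := ↑g
  set H : Matrix (Fin n) (Fin n) ℂ := ↑g⁻¹
  have hHG : H * G = 1 := g.inv_mul
  have hσHσG : σ H * σ G = 1 := by rw [← map_mul, hHG, map_one]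
  have hσGσH : σ G * σ H = 1 := by rw [← map_mul, g.mul_inv, map_one]
  obtain ⟨a, ha⟩ := eq_smul_one_of_forall_traceless_commute (M := σ H * G) fun X hX => by
    obtain ⟨Y, hY⟩ := h X hX
    have hσ : ∀ Z : Matrix (Fin n) (Fin n) ℝ, σ (Z.map ofReal) = Z.map ofReal :=
      map_ofReal_map_conj
    have hconj : σ G * X.map ofReal * σ H = G * X.map ofReal * H := by
      have := congrArg σ hY
      rwa [map_mul, map_mul, hσ, hσ, ← hY] at this
    calc σ H * G * X.map ofReal = σ H * (G * X.map ofReal * H) * G := by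
          simp only [Matrix.mul_assoc, hHG, Matrix.mul_one]
      _ = X.map ofReal * (σ H * G) := by
          rw [← hconj]
          simp only [← Matrix.mul_assoc, hσHσG, Matrix.one_mul]
  refine ⟨a, ?_⟩
  calc G = σ G * (σ H * G) := by rw [← Matrix.mul_assoc, hσGσH, Matrix.one_mul]
    _ = a • G.map (starRingEnd ℂ) := by rw [ha, Matrix.mul_smul, Matrix.mul_one]; rfl

lemma isScalarTimesReal_of_adPreservesReal (hn : n ≠ 0) {g : (Matrix (Fin n) (Fin n) ℂ)ˣ}
    (hdet : (g : Matrix (Fin n) (Fin n) ℂ).det = 1) (h : AdPreservesReal n g) :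
    IsScalarTimesReal n g {1, -1} := by
  obtain ⟨a, ha⟩ := exists_eq_smul_map_conj_of_adPreservesReal h
  have han : a ^ n = 1 := by
    have := congrArg det ha
    rwa [det_smul, Fintype.card_fin, ← RingHom.mapMatrix_apply, ← RingHom.map_det, hdet, map_one,
      mul_one, eq_comm] at this
  obtain ⟨w, hw, B, hB⟩ :=
    exists_eq_smul_map_ofReal_of_eq_smul_map_conj (norm_eq_one_of_pow_eq_one han hn) ha
  refine ⟨w, B, ?_, hB⟩
  have habs : |B.det| = 1 := by
    have := congrArg (‖det ·‖) hB
    simpa [hdet, det_smul, det_map_ofReal, hw] using this.symm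
  simpa using (abs_eq zero_le_one).mp habs

lemma isScalarTimesReal_one_of_odd (hodd : Odd n) {g : (Matrix (Fin n) (Fin n) ℂ)ˣ}
    (h : IsScalarTimesReal n g {1, -1}) : IsScalarTimesReal n g {1} := by
  obtain ⟨c, B, hB | hB, hg⟩ := h
  · exact ⟨c, B, hB, hg⟩
  · refine ⟨-c, -B, ?_, ?_⟩
    · rw [Set.mem_singleton_iff] at hB ⊢
      rw [det_neg, Fintype.card_fin, hB, hodd.neg_one_pow, neg_one_mul, neg_neg]
    · rw [hg, neg_smul, ← smul_neg]
      congr 1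
      ext i j
      simp

lemma not_isScalarTimesReal_one_of_det_neg (hev : Even n) {g : (Matrix (Fin n) (Fin n) ℂ)ˣ}
    {c : ℂ} {A : Matrix (Fin n) (Fin n) ℝ} (hA : A.det < 0)
    (hg : (g : Matrix (Fin n) (Fin n) ℂ) = c • A.map ofReal) :
    ¬ IsScalarTimesReal n g {1} := by
  rintro ⟨c', B, hB, hg'⟩
  rw [Set.mem_singleton_iff] at hB
  have hn : n ≠ 0 := by rintro rfl; simp [det_fin_zero] at hA; linarith
  obtain ⟨i, j, hij⟩ : ∃ i j, A i j ≠ 0 := by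
    by_contra! h0
    exact hA.ne (det_eq_zero_of_row_eq_zero ⟨0, by omega⟩ (h0 _))
  set r : ℝ := B i j / A i j
  have hc : c = c' * r := by
    have := congrFun (congrFun (hg.symm.trans hg') i) j
    simp only [Matrix.smul_apply, map_apply, smul_eq_mul] at this
    have hA0 : (A i j : ℂ) ≠ 0 := ofReal_ne_zero.mpr hij
    simp only [r, ofReal_div]
    field_simp
    linear_combination this
  have hdet' : (g : Matrix (Fin n) (Fin n) ℂ).det = c' ^ n := by
    rw [hg', det_smul, det_map_ofReal, hB, Fintype.card_fin, ofReal_one, mul_one]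
  have hdet : (g : Matrix (Fin n) (Fin n) ℂ).det = c' ^ n * ((r ^ n * A.det : ℝ) : ℂ) := by
    rw [hg, det_smul, det_map_ofReal, hc, Fintype.card_fin]
    push_cast
    ring
  have hc'n : c' ^ n ≠ 0 := hdet' ▸ ((isUnit_iff_isUnit_det _).mp g.isUnit).ne_zero
  have hr : r ^ n * A.det = 1 := by
    exact_mod_cast mul_left_cancel₀ hc'n (hdet.symm.trans (hdet'.trans (mul_one _).symm))
  nlinarith [hev.pow_nonneg r]

lemma exists_adPreservesReal_not_isScalarTimesReal_one (hn : 0 < n) (hev : Even n) :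
    ∃ g : (Matrix (Fin n) (Fin n) ℂ)ˣ, (g : Matrix (Fin n) (Fin n) ℂ).det = 1 ∧
      AdPreservesReal n g ∧ ¬ IsScalarTimesReal n g {1} := by
  obtain ⟨c, hc⟩ := IsAlgClosed.exists_pow_nat_eq (-1 : ℂ) hn
  set A : Matrix (Fin n) (Fin n) ℝ := diagonal (Function.update 1 ⟨0, hn⟩ (-1))
  have hA : A.det = -1 := by
    simp [A, det_diagonal, Finset.prod_update_of_mem]
  have hdet : (c • A.map ofReal).det = 1 := by
    rw [det_smul, Fintype.card_fin, det_map_ofReal, hA, hc]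
    norm_num
  have hunit : IsUnit (c • A.map ofReal) := (isUnit_iff_isUnit_det _).mpr (hdet ▸ isUnit_one)
  exact ⟨hunit.unit, hdet, adPreservesReal_of_eq_smul_map_ofReal _ c A (by simp [hA]) rfl,
    not_isScalarTimesReal_one_of_det_neg hev (by rw [hA]; norm_num) rfl⟩

end SpecialLinear

/-- For `G = Ad(SL(n,ℝ))`, the group
`G̃ = {g ∈ Ad(SL(n,ℂ)) : Ad(g) preserves sl(n,ℝ)}` is `SL(n,ℝ)` for `n` odd and
`Ad(SL(n,ℝ)^±)` for `n` even.  Concretely: an element `g` of `SL(n,ℂ)` preserves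
`sl(n,ℝ)` under conjugation iff it is a complex scalar multiple of a real matrix of
determinant `±1`; if `n` is odd one can always take the real matrix of determinant `1`
(so `G̃ ≅ SL(n,ℝ)`), while for `n` even there is such a `g` that is not a scalar times a
real determinant-one matrix (the determinant `-1` component: `G̃ ≅ Ad(SL(n,ℝ)^±)` is
disconnected). -/
theorem stmt7 (n : ℕ) (hn : 1 ≤ n) :
    (∀ g : (Matrix (Fin n) (Fin n) ℂ)ˣ,
        Matrix.det (g : Matrix (Fin n) (Fin n) ℂ) = 1 →
        (AdPreservesReal n g ↔ IsScalarTimesReal n g ({1, -1} : Set ℝ))) ∧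
    (Odd n → ∀ g : (Matrix (Fin n) (Fin n) ℂ)ˣ,
        Matrix.det (g : Matrix (Fin n) (Fin n) ℂ) = 1 →
        AdPreservesReal n g → IsScalarTimesReal n g ({1} : Set ℝ)) ∧
    (Even n → ∃ g : (Matrix (Fin n) (Fin n) ℂ)ˣ,
        Matrix.det (g : Matrix (Fin n) (Fin n) ℂ) = 1 ∧
        AdPreservesReal n g ∧ ¬ IsScalarTimesReal n g ({1} : Set ℝ)) := by
  have hn0 : n ≠ 0 := by omega
  refine ⟨fun g hdet => ⟨isScalarTimesReal_of_adPreservesReal hn0 hdet, ?_⟩,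
    fun hodd g hdet h => isScalarTimesReal_one_of_odd hodd
      (isScalarTimesReal_of_adPreservesReal hn0 hdet h),
    exists_adPreservesReal_not_isScalarTimesReal_one hn⟩
  rintro ⟨c, B, hB, hg⟩
  refine adPreservesReal_of_eq_smul_map_ofReal g c B (isUnit_iff_ne_zero.mpr fun h0 => ?_) hg
  norm_num [h0] at hB
end

section
/- Fix a subset S of the simple roots Π of a semisimple root system. Define an action of W_S (the parabolic subgroup of the Weyl group generated by {s_α : α ∈ S}) on pairs (η, o) where η : S → {±1} and o ∈ {±1}: s_{α_i} sends η to η' with η'_j = η_j η_i^{-C_{j,i}} for α_j ∈ S, and sends o to (η_i)^{r_i} o where r_i = #{α_j ∈ Π∖S : C_{j,i} odd}. Then this is a well-defined group action of W_S, i.e. it respects all Coxeter relations of W_S. -/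
/-!
Each `T i` is a transvection `p ↦ p * e_i (η_i)` for a homomorphism `e_i : ℤˣ →* (Fin l → ℤˣ) × ℤˣ`,
and `T i` fixes `η_i` because `C i i = 2` is even; hence `T i (T i p) = p * e_i (η_i ^ 2) = p`.
For `i ≠ j`, `T i ∘ T j` moves the pair `(η_i, η_j)` by a map that depends only on the parities of
`C i j` and `C j i`, and multiplies the state by `e_j` and `e_i` of the products of `η_j` and `η_i`
along this orbit. For each crystallographic pair `(C i j, C j i)` both products over `m_ij` steps
are trivial, so `(T i ∘ T j)^[m_ij] = id`.
-/

open Finset Function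

/-- The effect of `T i ∘ T j` on `(η_i, η_j)`, with `c = -C i j` and `d = -C j i`. -/
def braidStep (c d : ℤ) (z : ℤˣ × ℤˣ) : ℤˣ × ℤˣ :=
  (z.1 * z.2 ^ c, z.2 * (z.1 * z.2 ^ c) ^ d)

lemma braidStep_orbit_prod {c d : ℤ} (hc : 0 ≤ c) (hd : 0 ≤ d) (hcd : c = 0 ↔ d = 0)
    (hcd3 : c * d ≤ 3) (z : ℤˣ × ℤˣ) :
    let m := if c * d = 0 then 2 else if c * d = 1 then 3 else if c * d = 2 then 4 else 6
    ∏ t ∈ range m, ((braidStep c d)^[t] z).2 = 1 ∧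
      ∏ t ∈ range m, ((braidStep c d)^[t + 1] z).1 = 1 := by
  revert z
  rcases hc.eq_or_lt with rfl | hc0
  · obtain rfl := hcd.1 rfl
    decide
  have hd0 : 0 < d := lt_of_le_of_ne hd (Ne.symm (mt hcd.2 hc0.ne'))
  have hc3 : c ≤ 3 := by nlinarith
  have hd3 : d ≤ 3 := by nlinarith
  interval_cases c <;> interval_cases d <;> first | omega | decide

section Transvection

variable {ι G : Type*} [CommGroup G] {π : ι → G →* ℤˣ} {e : ι → ℤˣ →* G} {T : ι → G → G}

lemma comp_self_eq_id_of_eq_mul (hT : ∀ i p, T i p = p * e i (π i p)) {i : ι}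
    (hii : ∀ u, π i (e i u) = 1) : T i ∘ T i = id := by
  funext p
  rw [comp_apply, hT, hT, map_mul, hii, mul_one, mul_assoc, ← map_mul, Int.units_mul_self,
    map_one, mul_one, id]

variable {i j : ι} {c d : ℤ}

lemma coord_apply_eq_mul_zpow (hT : ∀ i p, T i p = p * e i (π i p))
    (hij : ∀ u, π i (e j u) = u ^ c) (p : G) : π i (T j p) = π i p * π j p ^ c := by
  rw [hT, map_mul, hij]

lemma semiconj_braidStep (hT : ∀ i p, T i p = p * e i (π i p))
    (hii : ∀ u, π i (e i u) = 1) (hjj : ∀ u, π j (e j u) = 1)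
    (hij : ∀ u, π i (e j u) = u ^ c) (hji : ∀ u, π j (e i u) = u ^ d) :
    Semiconj (fun p => (π i p, π j p)) (T i ∘ T j) (braidStep c d) := by
  intro p
  change (π i (T i (T j p)), π j (T i (T j p))) = braidStep c d (π i p, π j p)
  rw [hT i, map_mul, map_mul, hii, mul_one, hji, coord_apply_eq_mul_zpow hT hij, hT j, map_mul,
    hjj, mul_one]
  rfl

lemma iterate_comp_apply (hT : ∀ i p, T i p = p * e i (π i p))
    (hii : ∀ u, π i (e i u) = 1) (hjj : ∀ u, π j (e j u) = 1)
    (hij : ∀ u, π i (e j u) = u ^ c) (hji : ∀ u, π j (e i u) = u ^ d) (n : ℕ) (p : G) :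
    (T i ∘ T j)^[n] p = p * e j (∏ t ∈ range n, ((braidStep c d)^[t] (π i p, π j p)).2) *
      e i (∏ t ∈ range n, ((braidStep c d)^[t + 1] (π i p, π j p)).1) := by
  induction n with
  | zero => simp
  | succ n ih =>
    obtain ⟨hx, hy⟩ := Prod.ext_iff.1 ((semiconj_braidStep hT hii hjj hij hji).iterate_right n p)
    dsimp only at hx hy
    rw [iterate_succ_apply', comp_apply, hT i, coord_apply_eq_mul_zpow hT hij, hT j, hx, hy, ih,
      prod_range_succ, prod_range_succ, iterate_succ_apply' (braidStep c d) n]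
    simp only [braidStep, map_mul]
    ac_rfl

lemma iterate_comp_eq_id (hT : ∀ i p, T i p = p * e i (π i p))
    (hii : ∀ u, π i (e i u) = 1) (hjj : ∀ u, π j (e j u) = 1)
    (hij : ∀ u, π i (e j u) = u ^ c) (hji : ∀ u, π j (e i u) = u ^ d) {m : ℕ}
    (hm : ∀ z, ∏ t ∈ range m, ((braidStep c d)^[t] z).2 = 1 ∧
      ∏ t ∈ range m, ((braidStep c d)^[t + 1] z).1 = 1) :
    (T i ∘ T j)^[m] = id := by
  funext p
  rw [iterate_comp_apply hT hii hjj hij hji, (hm _).1, (hm _).2, map_one, map_one, mul_one,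
    mul_one, id]

end Transvection

section SignAction

variable {l : ℕ}

def coordHom (i : Fin l) : (Fin l → ℤˣ) × ℤˣ →* ℤˣ :=
  (Pi.evalMonoidHom _ i).comp (MonoidHom.fst _ _)

def shiftHom (C : Matrix (Fin l) (Fin l) ℤ) (S : Finset (Fin l)) (r : Fin l → ℕ) (i : Fin l) :
    ℤˣ →* (Fin l → ℤˣ) × ℤˣ :=
  (MonoidHom.pi fun j => if j ∈ S then zpowGroupHom (-C j i) else 1).prod (powMonoidHom (r i))

lemma coordHom_shiftHom {C : Matrix (Fin l) (Fin l) ℤ} {S : Finset (Fin l)} {r : Fin l → ℕ}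
    {i : Fin l} (hi : i ∈ S) (j : Fin l) (u : ℤˣ) :
    coordHom i (shiftHom C S r j u) = u ^ (-C i j) := by
  simp [coordHom, shiftHom, hi]

end SignAction

theorem stmt9_general (l : ℕ) (C : Matrix (Fin l) (Fin l) ℤ)
    (hdiag : ∀ i, C i i = 2)
    (hoff : ∀ i j, i ≠ j → C i j ≤ 0)
    (hzero : ∀ i j, (C i j = 0 ↔ C j i = 0))
    (hcrys : ∀ i j, i ≠ j → C i j * C j i ≤ 3)
    (S : Finset (Fin l))
    (r : Fin l → ℕ)
    (T : Fin l → ((Fin l → ℤˣ) × ℤˣ) → ((Fin l → ℤˣ) × ℤˣ))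
    (hT : ∀ i p, T i p =
      (fun j => if j ∈ S then p.1 j * (p.1 i) ^ (-(C j i)) else p.1 j,
        (p.1 i) ^ (r i) * p.2)) :
    (∀ i ∈ S, T i ∘ T i = id) ∧
    (∀ i ∈ S, ∀ j ∈ S, i ≠ j →
      (T i ∘ T j)^[if C i j * C j i = 0 then 2
        else if C i j * C j i = 1 then 3
        else if C i j * C j i = 2 then 4 else 6] = id) := by
  have hT' : ∀ i p, T i p = p * shiftHom C S r i (coordHom i p) := by
    intro i p
    rw [hT]
    ext j
    · by_cases hj : j ∈ S <;> simp [shiftHom, coordHom, hj]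
    · simp [shiftHom, coordHom, mul_comm]
  have hself : ∀ i ∈ S, ∀ u, coordHom i (shiftHom C S r i u) = 1 := fun i hi u => by
    rw [coordHom_shiftHom hi, hdiag, zpow_neg, zpow_ofNat, Int.units_sq, inv_one]
  refine ⟨fun i hi => comp_self_eq_id_of_eq_mul hT' (hself i hi), fun i hi j hj hij => ?_⟩
  rw [← neg_mul_neg]
  exact iterate_comp_eq_id hT' (hself i hi) (hself j hj) (coordHom_shiftHom hi j)
    (coordHom_shiftHom hj i) (braidStep_orbit_prod (neg_nonneg.2 (hoff i j hij))
      (neg_nonneg.2 (hoff j i hij.symm)) (by simpa using hzero i j) (by simpa using hcrys i j hij))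

/-- Fix a subset `S` of the simple roots (vertices `Fin l`) of a
semisimple root system with Cartan matrix `C`.  The prescription
`s_{α_i} : (η, o) ↦ (η', (η_i)^{r_i} o)` with `η'_j = η_j η_i^{-C_{j,i}}` for `j ∈ S`
(and `η'_j = η_j` otherwise), where `r_i = #{α_j ∉ S : C_{j,i} odd}`, respects all
Coxeter relations of `W_S`: each `T_i` (for `i ∈ S`) is an involution and
`(T_i ∘ T_j)` has order dividing `m_{ij} ∈ {2,3,4,6}` determined by
`C_{i,j}·C_{j,i} ∈ {0,1,2,3}`.  Hence it defines a `W_S`-action on the pairs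
`(η, o)` (colored diagrams with orientation). -/
theorem stmt9 (l : ℕ) (C : Matrix (Fin l) (Fin l) ℤ)
    (hdiag : ∀ i, C i i = 2)
    (hoff : ∀ i j, i ≠ j → C i j ≤ 0)
    (hzero : ∀ i j, (C i j = 0 ↔ C j i = 0))
    (hcrys : ∀ i j, i ≠ j → C i j * C j i ≤ 3)
    (S : Finset (Fin l))
    (r : Fin l → ℕ)
    (hr : ∀ i, r i = Nat.card {j : Fin l // j ∉ S ∧ Odd (C j i)})
    (T : Fin l → ((Fin l → ℤˣ) × ℤˣ) → ((Fin l → ℤˣ) × ℤˣ))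
    (hT : ∀ i p, T i p =
      (fun j => if j ∈ S then p.1 j * (p.1 i) ^ (-(C j i)) else p.1 j,
        (p.1 i) ^ (r i) * p.2)) :
    (∀ i ∈ S, T i ∘ T i = id) ∧
    (∀ i ∈ S, ∀ j ∈ S, i ≠ j →
      (T i ∘ T j)^[if C i j * C j i = 0 then 2
        else if C i j * C j i = 1 then 3
        else if C i j * C j i = 2 then 4 else 6] = id) :=
  stmt9_general l C hdiag hoff hzero hcrys S r T hT
end

section
/- For the chain complex M_* of type A_2 (sl(3,ℝ)): M_2 ≅ ℤ^6 (one generator per Weyl chamber), M_1 ≅ ℤ^{12}, M_0 ≅ ℤ^4, and the homology of the complex M_2 → M_1 → M_0 is H_2 = 0, H_1 = ℤ³ ⊕ ℤ/2ℤ, H_0 = ℤ. In particular the Euler characteristic is 6 - 12 + 4 = -2 and the manifold Ĥ_ℝ is non-orientable. -/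
/-- The boundary matrix `∂₂ : M₂ → M₁` of the colored-Dynkin-diagram chain complex for
`sl(3,ℝ)`.  Columns are indexed by the six 2-cells `(∘-∘, w)`, `w ∈ S₃` in the order
`e, s₁, s₂, s₁s₂, s₂s₁, s₁s₂s₁`; rows by the twelve 1-cells
`(∘_R-∘,[e]),(∘_B-∘,[e]),(∘_R-∘,[s₂]),(∘_B-∘,[s₂]),(∘_R-∘,[s₁s₂]),(∘_B-∘,[s₁s₂]),
(∘-∘_R,[e]),(∘-∘_B,[e]),(∘-∘_R,[s₁]),(∘-∘_B,[s₁]),(∘-∘_R,[s₂s₁]),(∘-∘_B,[s₂s₁])`.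
Entries implement coloring each uncolored vertex `R`/`B` with signs `(-1)^{j+c+1}`
together with the `W`-translation/orientation identifications of the paper. -/
def todaD2 : Matrix (Fin 12) (Fin 6) ℤ :=
  !![1,-1,0,0,0,0; -1,-1,0,0,0,0; 0,0,1,0,-1,0; 0,0,-1,0,-1,0;
     0,0,0,1,0,-1; 0,0,0,-1,0,-1; -1,0,1,0,0,0; 1,0,1,0,0,0;
     0,-1,0,1,0,0; 0,1,0,1,0,0; 0,0,0,0,-1,1; 0,0,0,0,1,1]

/-- The boundary matrix `∂₁ : M₁ → M₀` for `sl(3,ℝ)`; rows indexed by the four 0-cells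
`(∘_B-∘_B,[e]), (∘_B-∘_R,[e]), (∘_R-∘_B,[e]), (∘_R-∘_R,[e])`. -/
def todaD1 : Matrix (Fin 4) (Fin 12) ℤ :=
  !![0,1,0,1,0,1,0,1,0,1,0,1;
     0,-1,-1,0,-1,0,1,0,1,0,0,-1;
     1,0,1,0,0,-1,0,-1,-1,0,-1,0;
     -1,0,0,-1,1,0,-1,0,0,-1,1,0]

/-! ### Smith-normal-form certificates, computed offline -/

def matE2 : Matrix (Fin 12) (Fin 6) ℤ :=
  !![1,0,0,0,0,0; 0,1,0,0,0,0; 0,0,1,0,0,0; 0,0,0,1,0,0; 0,0,0,0,1,0; 0,0,0,0,0,2;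
     0,0,0,0,0,0; 0,0,0,0,0,0; 0,0,0,0,0,0; 0,0,0,0,0,0; 0,0,0,0,0,0; 0,0,0,0,0,0]

def matE1 : Matrix (Fin 4) (Fin 12) ℤ :=
  !![0,0,0,0,0,0,0,0,0,1,0,0; 0,0,0,0,0,0,0,0,0,0,1,0;
     0,0,0,0,0,0,0,0,0,0,0,1; 0,0,0,0,0,0,0,0,0,0,0,0]

def matA : Matrix (Fin 12) (Fin 12) ℤ :=
  !![1,0,0,0,0,0,0,0,0,0,0,0;
     -1,0,0,0,0,0,-1,0,0,0,0,0;
     0,0,1,0,0,0,0,0,0,0,0,0;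
     1,0,-1,0,0,0,1,0,-1,0,0,0;
     0,0,0,0,1,0,0,0,0,0,0,0;
     0,0,0,0,-1,-1,0,0,0,0,0,0;
     0,0,0,0,-1,1,0,0,1,1,0,0;
     1,0,-1,0,1,0,1,0,-1,0,1,0;
     -1,0,1,0,0,1,-1,0,1,0,0,1;
     0,1,0,1,0,1,0,1,0,1,0,1;
     0,0,-1,1,-1,1,1,1,1,1,0,0;
     1,0,0,1,-1,0,1,0,0,1,-1,0]

def matAinv : Matrix (Fin 12) (Fin 12) ℤ :=
  !![1,0,0,0,0,0,0,0,0,0,0,0;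
     -1,-2,-2,-2,-2,-1,0,0,-1,1,-1,0;
     0,0,1,0,0,0,0,0,0,0,0,0;
     0,0,-1,-2,-2,-1,-1,1,0,0,0,1;
     0,0,0,0,1,0,0,0,0,0,0,0;
     0,0,0,0,-1,-1,0,0,0,0,0,0;
     -1,-1,0,0,0,0,0,0,0,0,0,0;
     1,1,2,2,2,1,0,-1,0,0,1,-1;
     0,-1,-1,-1,0,0,0,0,0,0,0,0;
     0,1,1,1,2,1,1,0,0,0,0,0;
     0,0,0,-1,-1,0,0,1,0,0,0,0;
     0,0,0,1,1,1,0,0,1,0,0,0]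

def matB : Matrix (Fin 6) (Fin 6) ℤ :=
  !![1,1,1,1,1,1; 0,1,1,1,1,1; 0,0,1,1,1,1; 0,0,0,0,1,1; 0,0,0,1,1,1; 0,0,0,0,0,1]

def matBinv : Matrix (Fin 6) (Fin 6) ℤ :=
  !![1,-1,0,0,0,0; 0,1,-1,0,0,0; 0,0,1,0,-1,0; 0,0,0,-1,1,0; 0,0,0,1,0,-1; 0,0,0,0,0,1]

def matC : Matrix (Fin 4) (Fin 4) ℤ :=
  !![1,0,0,0; 1,1,0,0; 1,1,1,0; 1,1,1,1]

def matCinv : Matrix (Fin 4) (Fin 4) ℤ :=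
  !![1,0,0,0; -1,1,0,0; 0,-1,1,0; 0,0,-1,1]

def matL : Matrix (Fin 6) (Fin 12) ℤ :=
  !![2,0,0,0,1,-1,0,0,-2,0,0,0;
     0,0,0,0,1,-1,0,0,-2,0,0,0;
     2,0,0,0,1,-1,2,0,-2,0,0,0;
     0,0,0,0,1,-1,0,0,0,0,0,0;
     2,0,-2,0,1,-1,2,0,-2,0,0,0;
     0,0,0,0,-1,-1,0,0,0,0,0,0]

lemma hAAinv : matA * matAinv = 1 := by decide
lemma hAinvA : matAinv * matA = 1 := by decide
lemma hBinvB : matBinv * matB = 1 := by decide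
lemma hCCinv : matC * matCinv = 1 := by decide
lemma hCinvC : matCinv * matC = 1 := by decide
lemma hD2fact : matAinv * matE2 * matBinv = todaD2 := by decide
lemma hD1fact : matCinv * matE1 * matA = todaD1 := by decide
lemma hLD2 : matL * todaD2 = (2:ℤ) • 1 := by decide
lemma hD1D2 : todaD1 * todaD2 = 0 := by decide

lemma cancelA (v : Fin 12 → ℤ) : matA.mulVec (matAinv.mulVec v) = v := by
  rw [Matrix.mulVec_mulVec, hAAinv, Matrix.one_mulVec]

lemma cancelA' (v : Fin 12 → ℤ) : matAinv.mulVec (matA.mulVec v) = v := by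
  rw [Matrix.mulVec_mulVec, hAinvA, Matrix.one_mulVec]

lemma cancelB' (v : Fin 6 → ℤ) : matBinv.mulVec (matB.mulVec v) = v := by
  rw [Matrix.mulVec_mulVec, hBinvB, Matrix.one_mulVec]

lemma cancelC (v : Fin 4 → ℤ) : matC.mulVec (matCinv.mulVec v) = v := by
  rw [Matrix.mulVec_mulVec, hCCinv, Matrix.one_mulVec]

lemma cancelC' (v : Fin 4 → ℤ) : matCinv.mulVec (matC.mulVec v) = v := by
  rw [Matrix.mulVec_mulVec, hCinvC, Matrix.one_mulVec]
lemma sum12I (f : Fin 12 → ℤ) :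
    ∑ i, f i = f 0 + (f 1 + (f 2 + (f 3 + (f 4 + (f 5 + (f 6 + (f 7 + (f 8 + (f 9 + (f 10 + (f 11 + 0))))))))))) := rfl

lemma e2v0 (u : Fin 6 → ℤ) : matE2.mulVec u 0 = u 0 := by
  have h0 : matE2 0 0 = 1 := rfl
  have h1 : matE2 0 1 = 0 := rfl
  have h2 : matE2 0 2 = 0 := rfl
  have h3 : matE2 0 3 = 0 := rfl
  have h4 : matE2 0 4 = 0 := rfl
  have h5 : matE2 0 5 = 0 := rfl
  simp [Matrix.mulVec, dotProduct, Fin.sum_univ_six, h0, h1, h2, h3, h4, h5]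

lemma e2v1 (u : Fin 6 → ℤ) : matE2.mulVec u 1 = u 1 := by
  have h0 : matE2 1 0 = 0 := rfl
  have h1 : matE2 1 1 = 1 := rfl
  have h2 : matE2 1 2 = 0 := rfl
  have h3 : matE2 1 3 = 0 := rfl
  have h4 : matE2 1 4 = 0 := rfl
  have h5 : matE2 1 5 = 0 := rfl
  simp [Matrix.mulVec, dotProduct, Fin.sum_univ_six, h0, h1, h2, h3, h4, h5]

lemma e2v2 (u : Fin 6 → ℤ) : matE2.mulVec u 2 = u 2 := by
  have h0 : matE2 2 0 = 0 := rfl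
  have h1 : matE2 2 1 = 0 := rfl
  have h2 : matE2 2 2 = 1 := rfl
  have h3 : matE2 2 3 = 0 := rfl
  have h4 : matE2 2 4 = 0 := rfl
  have h5 : matE2 2 5 = 0 := rfl
  simp [Matrix.mulVec, dotProduct, Fin.sum_univ_six, h0, h1, h2, h3, h4, h5]

lemma e2v3 (u : Fin 6 → ℤ) : matE2.mulVec u 3 = u 3 := by
  have h0 : matE2 3 0 = 0 := rfl
  have h1 : matE2 3 1 = 0 := rfl
  have h2 : matE2 3 2 = 0 := rfl
  have h3 : matE2 3 3 = 1 := rfl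
  have h4 : matE2 3 4 = 0 := rfl
  have h5 : matE2 3 5 = 0 := rfl
  simp [Matrix.mulVec, dotProduct, Fin.sum_univ_six, h0, h1, h2, h3, h4, h5]

lemma e2v4 (u : Fin 6 → ℤ) : matE2.mulVec u 4 = u 4 := by
  have h0 : matE2 4 0 = 0 := rfl
  have h1 : matE2 4 1 = 0 := rfl
  have h2 : matE2 4 2 = 0 := rfl
  have h3 : matE2 4 3 = 0 := rfl
  have h4 : matE2 4 4 = 1 := rfl
  have h5 : matE2 4 5 = 0 := rfl
  simp [Matrix.mulVec, dotProduct, Fin.sum_univ_six, h0, h1, h2, h3, h4, h5]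

lemma e2v5 (u : Fin 6 → ℤ) : matE2.mulVec u 5 = 2 * u 5 := by
  have h0 : matE2 5 0 = 0 := rfl
  have h1 : matE2 5 1 = 0 := rfl
  have h2 : matE2 5 2 = 0 := rfl
  have h3 : matE2 5 3 = 0 := rfl
  have h4 : matE2 5 4 = 0 := rfl
  have h5 : matE2 5 5 = 2 := rfl
  simp [Matrix.mulVec, dotProduct, Fin.sum_univ_six, h0, h1, h2, h3, h4, h5]

lemma e2v6 (u : Fin 6 → ℤ) : matE2.mulVec u 6 = 0 := by
  have h0 : matE2 6 0 = 0 := rfl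
  have h1 : matE2 6 1 = 0 := rfl
  have h2 : matE2 6 2 = 0 := rfl
  have h3 : matE2 6 3 = 0 := rfl
  have h4 : matE2 6 4 = 0 := rfl
  have h5 : matE2 6 5 = 0 := rfl
  simp [Matrix.mulVec, dotProduct, Fin.sum_univ_six, h0, h1, h2, h3, h4, h5]

lemma e2v7 (u : Fin 6 → ℤ) : matE2.mulVec u 7 = 0 := by
  have h0 : matE2 7 0 = 0 := rfl
  have h1 : matE2 7 1 = 0 := rfl
  have h2 : matE2 7 2 = 0 := rfl
  have h3 : matE2 7 3 = 0 := rfl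
  have h4 : matE2 7 4 = 0 := rfl
  have h5 : matE2 7 5 = 0 := rfl
  simp [Matrix.mulVec, dotProduct, Fin.sum_univ_six, h0, h1, h2, h3, h4, h5]

lemma e2v8 (u : Fin 6 → ℤ) : matE2.mulVec u 8 = 0 := by
  have h0 : matE2 8 0 = 0 := rfl
  have h1 : matE2 8 1 = 0 := rfl
  have h2 : matE2 8 2 = 0 := rfl
  have h3 : matE2 8 3 = 0 := rfl
  have h4 : matE2 8 4 = 0 := rfl
  have h5 : matE2 8 5 = 0 := rfl
  simp [Matrix.mulVec, dotProduct, Fin.sum_univ_six, h0, h1, h2, h3, h4, h5]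

lemma e2v9 (u : Fin 6 → ℤ) : matE2.mulVec u 9 = 0 := by
  have h0 : matE2 9 0 = 0 := rfl
  have h1 : matE2 9 1 = 0 := rfl
  have h2 : matE2 9 2 = 0 := rfl
  have h3 : matE2 9 3 = 0 := rfl
  have h4 : matE2 9 4 = 0 := rfl
  have h5 : matE2 9 5 = 0 := rfl
  simp [Matrix.mulVec, dotProduct, Fin.sum_univ_six, h0, h1, h2, h3, h4, h5]

lemma e2v10 (u : Fin 6 → ℤ) : matE2.mulVec u 10 = 0 := by
  have h0 : matE2 10 0 = 0 := rfl
  have h1 : matE2 10 1 = 0 := rfl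
  have h2 : matE2 10 2 = 0 := rfl
  have h3 : matE2 10 3 = 0 := rfl
  have h4 : matE2 10 4 = 0 := rfl
  have h5 : matE2 10 5 = 0 := rfl
  simp [Matrix.mulVec, dotProduct, Fin.sum_univ_six, h0, h1, h2, h3, h4, h5]

lemma e2v11 (u : Fin 6 → ℤ) : matE2.mulVec u 11 = 0 := by
  have h0 : matE2 11 0 = 0 := rfl
  have h1 : matE2 11 1 = 0 := rfl
  have h2 : matE2 11 2 = 0 := rfl
  have h3 : matE2 11 3 = 0 := rfl
  have h4 : matE2 11 4 = 0 := rfl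
  have h5 : matE2 11 5 = 0 := rfl
  simp [Matrix.mulVec, dotProduct, Fin.sum_univ_six, h0, h1, h2, h3, h4, h5]

lemma e1v0 (y : Fin 12 → ℤ) : matE1.mulVec y 0 = y 9 := by
  have h0 : matE1 0 0 = 0 := rfl
  have h1 : matE1 0 1 = 0 := rfl
  have h2 : matE1 0 2 = 0 := rfl
  have h3 : matE1 0 3 = 0 := rfl
  have h4 : matE1 0 4 = 0 := rfl
  have h5 : matE1 0 5 = 0 := rfl
  have h6 : matE1 0 6 = 0 := rfl
  have h7 : matE1 0 7 = 0 := rfl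
  have h8 : matE1 0 8 = 0 := rfl
  have h9 : matE1 0 9 = 1 := rfl
  have h10 : matE1 0 10 = 0 := rfl
  have h11 : matE1 0 11 = 0 := rfl
  simp [Matrix.mulVec, dotProduct, sum12I, h0, h1, h2, h3, h4, h5, h6, h7, h8, h9, h10, h11]

lemma e1v1 (y : Fin 12 → ℤ) : matE1.mulVec y 1 = y 10 := by
  have h0 : matE1 1 0 = 0 := rfl
  have h1 : matE1 1 1 = 0 := rfl
  have h2 : matE1 1 2 = 0 := rfl
  have h3 : matE1 1 3 = 0 := rfl
  have h4 : matE1 1 4 = 0 := rfl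
  have h5 : matE1 1 5 = 0 := rfl
  have h6 : matE1 1 6 = 0 := rfl
  have h7 : matE1 1 7 = 0 := rfl
  have h8 : matE1 1 8 = 0 := rfl
  have h9 : matE1 1 9 = 0 := rfl
  have h10 : matE1 1 10 = 1 := rfl
  have h11 : matE1 1 11 = 0 := rfl
  simp [Matrix.mulVec, dotProduct, sum12I, h0, h1, h2, h3, h4, h5, h6, h7, h8, h9, h10, h11]

lemma e1v2 (y : Fin 12 → ℤ) : matE1.mulVec y 2 = y 11 := by
  have h0 : matE1 2 0 = 0 := rfl
  have h1 : matE1 2 1 = 0 := rfl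
  have h2 : matE1 2 2 = 0 := rfl
  have h3 : matE1 2 3 = 0 := rfl
  have h4 : matE1 2 4 = 0 := rfl
  have h5 : matE1 2 5 = 0 := rfl
  have h6 : matE1 2 6 = 0 := rfl
  have h7 : matE1 2 7 = 0 := rfl
  have h8 : matE1 2 8 = 0 := rfl
  have h9 : matE1 2 9 = 0 := rfl
  have h10 : matE1 2 10 = 0 := rfl
  have h11 : matE1 2 11 = 1 := rfl
  simp [Matrix.mulVec, dotProduct, sum12I, h0, h1, h2, h3, h4, h5, h6, h7, h8, h9, h10, h11]

lemma e1v3 (y : Fin 12 → ℤ) : matE1.mulVec y 3 = 0 := by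
  have h0 : matE1 3 0 = 0 := rfl
  have h1 : matE1 3 1 = 0 := rfl
  have h2 : matE1 3 2 = 0 := rfl
  have h3 : matE1 3 3 = 0 := rfl
  have h4 : matE1 3 4 = 0 := rfl
  have h5 : matE1 3 5 = 0 := rfl
  have h6 : matE1 3 6 = 0 := rfl
  have h7 : matE1 3 7 = 0 := rfl
  have h8 : matE1 3 8 = 0 := rfl
  have h9 : matE1 3 9 = 0 := rfl
  have h10 : matE1 3 10 = 0 := rfl
  have h11 : matE1 3 11 = 0 := rfl
  simp [Matrix.mulVec, dotProduct, sum12I, h0, h1, h2, h3, h4, h5, h6, h7, h8, h9, h10, h11]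

lemma hE1v (y : Fin 12 → ℤ) : matE1.mulVec y = ![y 9, y 10, y 11, 0] := by
  funext i
  fin_cases i
  · exact e1v0 y
  · exact e1v1 y
  · exact e1v2 y
  · exact e1v3 y

lemma hD2v (x : Fin 6 → ℤ) :
    todaD2.mulVec x = matAinv.mulVec (matE2.mulVec (matBinv.mulVec x)) := by
  rw [Matrix.mulVec_mulVec, Matrix.mulVec_mulVec, hD2fact]

lemma hD1v (v : Fin 12 → ℤ) :
    todaD1.mulVec v = matCinv.mulVec (matE1.mulVec (matA.mulVec v)) := by
  rw [Matrix.mulVec_mulVec, Matrix.mulVec_mulVec, hD1fact]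

/-- Membership in `ker ∂₁` in the adapted coordinates. -/
lemma memK (v : Fin 12 → ℤ) :
    todaD1.mulVec v = 0 ↔
      (matA.mulVec v) 9 = 0 ∧ (matA.mulVec v) 10 = 0 ∧ (matA.mulVec v) 11 = 0 := by
  rw [hD1v, hE1v]
  constructor
  · intro h
    have h2 : (![(matA.mulVec v) 9, (matA.mulVec v) 10, (matA.mulVec v) 11, 0] : Fin 4 → ℤ)
        = 0 := by
      have := congrArg matC.mulVec h
      rwa [cancelC, Matrix.mulVec_zero] at this
    exact ⟨congrFun h2 0, congrFun h2 1, congrFun h2 2⟩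
  · rintro ⟨h9, h10, h11⟩
    rw [h9, h10, h11, show (![0,0,0,0] : Fin 4 → ℤ) = 0 by decide, Matrix.mulVec_zero]

/-- The map computing `H₁`-coordinates. -/
def phi : (Fin 12 → ℤ) →ₗ[ℤ] (Fin 3 → ℤ) × ZMod 2 :=
  LinearMap.prod
    (LinearMap.pi fun i : Fin 3 =>
      (LinearMap.proj (⟨6 + i.1, by omega⟩ : Fin 12)) ∘ₗ matA.mulVecLin)
    ((Int.castRingHom (ZMod 2)).toIntLinearMap ∘ₗ
      (LinearMap.proj (5 : Fin 12)) ∘ₗ matA.mulVecLin)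

lemma phi_apply (v : Fin 12 → ℤ) :
    phi v = (fun i : Fin 3 => matA.mulVec v (⟨6 + i.1, by omega⟩ : Fin 12),
      ((matA.mulVec v 5 : ℤ) : ZMod 2)) := rfl

/-- For the chain complex `M₂ → M₁ → M₀` of type `A_2` (`sl(3,ℝ)`),
with `M₂ ≅ ℤ⁶` (one generator per Weyl chamber), `M₁ ≅ ℤ¹²`, `M₀ ≅ ℤ⁴`:
it is a complex (`∂₁∘∂₂ = 0`), and its homology is `H₂ = 0`,
`H₁ = ℤ³ ⊕ ℤ/2ℤ`, `H₀ = ℤ`.  In particular the Euler characteristic is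
`6 - 12 + 4 = -2` and (torsion in `H₁`, vanishing of `H₂`) the manifold `Ĥ_ℝ`
is non-orientable. -/
theorem stmt15 :
    (6 : ℤ) - 12 + 4 = -2 ∧
    todaD1.mulVecLin.comp todaD2.mulVecLin = 0 ∧
    LinearMap.ker todaD2.mulVecLin = ⊥ ∧
    Nonempty ((↥(LinearMap.ker todaD1.mulVecLin) ⧸
        (Submodule.comap (LinearMap.ker todaD1.mulVecLin).subtype
          (LinearMap.range todaD2.mulVecLin)))
      ≃ₗ[ℤ] ((Fin 3 → ℤ) × ZMod 2)) ∧
    Nonempty (((Fin 4 → ℤ) ⧸ LinearMap.range todaD1.mulVecLin) ≃ₗ[ℤ] ℤ) := by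
  refine ⟨by norm_num, ?_, ?_, ?_, ?_⟩
  · -- complex
    rw [← Matrix.mulVecLin_mul, hD1D2, Matrix.mulVecLin_zero]
  · -- H₂ = 0
    rw [LinearMap.ker_eq_bot']
    intro v hv
    have hv' : todaD2.mulVec v = 0 := hv
    have h2 : (2 : ℤ) • v = 0 := by
      have := congrArg matL.mulVec hv'
      rwa [Matrix.mulVec_mulVec, hLD2, Matrix.smul_mulVec, Matrix.one_mulVec,
        Matrix.mulVec_zero] at this
    exact (smul_eq_zero_iff_right (by norm_num : (2:ℤ) ≠ 0)).mp h2
  · -- H₁ ≅ ℤ³ × ℤ/2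
    set K := LinearMap.ker todaD1.mulVecLin with hK
    set φ : K →ₗ[ℤ] (Fin 3 → ℤ) × ZMod 2 := phi ∘ₗ K.subtype with hφ
    have hker : Submodule.comap K.subtype (LinearMap.range todaD2.mulVecLin)
        = LinearMap.ker φ := by
      ext x
      obtain ⟨v, hv⟩ := x
      have hvK : todaD1.mulVec v = 0 := hv
      obtain ⟨h9, h10, h11⟩ := (memK v).mp hvK
      simp only [Submodule.mem_comap, LinearMap.mem_range, LinearMap.mem_ker,
        Submodule.coe_subtype, hφ, LinearMap.comp_apply]
      constructor
      · rintro ⟨x, hx⟩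
        have hx' : todaD2.mulVec x = v := hx
        have hAv : matA.mulVec v = matE2.mulVec (matBinv.mulVec x) := by
          rw [← hx', hD2v, cancelA]
        show phi v = 0
        rw [phi_apply]
        rw [Prod.mk_eq_zero]
        constructor
        · funext i
          fin_cases i
          · show matA.mulVec v 6 = 0
            rw [hAv]; exact e2v6 _
          · show matA.mulVec v 7 = 0
            rw [hAv]; exact e2v7 _
          · show matA.mulVec v 8 = 0
            rw [hAv]; exact e2v8 _
        · show ((matA.mulVec v 5 : ℤ) : ZMod 2) = 0
          have h5 : matA.mulVec v 5 = 2 * matBinv.mulVec x 5 := by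
            rw [hAv]; exact e2v5 _
          rw [h5]
          exact (ZMod.intCast_zmod_eq_zero_iff_dvd _ 2).mpr ⟨matBinv.mulVec x 5, by norm_num⟩
      · intro h
        replace h : phi v = 0 := h
        rw [phi_apply, Prod.mk_eq_zero] at h
        obtain ⟨h1, h2⟩ := h
        have h6 : matA.mulVec v 6 = 0 := congrFun h1 0
        have h7 : matA.mulVec v 7 = 0 := congrFun h1 1
        have h8 : matA.mulVec v 8 = 0 := congrFun h1 2
        obtain ⟨k, hk⟩ := (ZMod.intCast_zmod_eq_zero_iff_dvd _ 2).mp h2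
        set u : Fin 6 → ℤ :=
          ![matA.mulVec v 0, matA.mulVec v 1, matA.mulVec v 2,
            matA.mulVec v 3, matA.mulVec v 4, k] with hu
        refine ⟨matB.mulVec u, ?_⟩
        have hEu : matE2.mulVec u = matA.mulVec v := by
          funext i
          fin_cases i
          · rw [show ((⟨0, by omega⟩ : Fin 12)) = (0 : Fin 12) from rfl, e2v0]; rfl
          · rw [show ((⟨1, by omega⟩ : Fin 12)) = (1 : Fin 12) from rfl, e2v1]; rfl
          · rw [show ((⟨2, by omega⟩ : Fin 12)) = (2 : Fin 12) from rfl, e2v2]; rfl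
          · rw [show ((⟨3, by omega⟩ : Fin 12)) = (3 : Fin 12) from rfl, e2v3]; rfl
          · rw [show ((⟨4, by omega⟩ : Fin 12)) = (4 : Fin 12) from rfl, e2v4]; rfl
          · rw [show ((⟨5, by omega⟩ : Fin 12)) = (5 : Fin 12) from rfl, e2v5]
            show 2 * k = matA.mulVec v 5
            omega
          · rw [show ((⟨6, by omega⟩ : Fin 12)) = (6 : Fin 12) from rfl, e2v6]
            exact h6.symm
          · rw [show ((⟨7, by omega⟩ : Fin 12)) = (7 : Fin 12) from rfl, e2v7]
            exact h7.symm
          · rw [show ((⟨8, by omega⟩ : Fin 12)) = (8 : Fin 12) from rfl, e2v8]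
            exact h8.symm
          · rw [show ((⟨9, by omega⟩ : Fin 12)) = (9 : Fin 12) from rfl, e2v9]
            exact h9.symm
          · rw [show ((⟨10, by omega⟩ : Fin 12)) = (10 : Fin 12) from rfl, e2v10]
            exact h10.symm
          · rw [show ((⟨11, by omega⟩ : Fin 12)) = (11 : Fin 12) from rfl, e2v11]
            exact h11.symm
        show todaD2.mulVec (matB.mulVec u) = v
        rw [hD2v, cancelB', hEu, cancelA']
    have hsurj : Function.Surjective φ := by
      rintro ⟨t, c⟩
      set w : Fin 12 → ℤ := ![0,0,0,0,0, (ZMod.cast c : ℤ), t 0, t 1, t 2, 0, 0, 0] with hw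
      set v : Fin 12 → ℤ := matAinv.mulVec w with hv
      have hAv : matA.mulVec v = w := cancelA w
      have hvK : v ∈ K := by
        show todaD1.mulVec v = 0
        rw [memK, hAv]
        exact ⟨rfl, rfl, rfl⟩
      refine ⟨⟨v, hvK⟩, ?_⟩
      show phi v = (t, c)
      rw [phi_apply]
      refine Prod.ext ?_ ?_
      · funext i
        fin_cases i <;> rw [hAv] <;> rfl
      · show ((matA.mulVec v 5 : ℤ) : ZMod 2) = c
        rw [hAv]
        exact ZMod.intCast_zmod_cast c
    exact ⟨(Submodule.quotEquivOfEq _ _ hker).trans (φ.quotKerEquivOfSurjective hsurj)⟩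
  · -- H₀ ≅ ℤ
    set ψ : (Fin 4 → ℤ) →ₗ[ℤ] ℤ := (LinearMap.proj (3 : Fin 4)) ∘ₗ matC.mulVecLin with hψ
    have hCD1 : matC * todaD1 = matE1 * matA := by decide
    have hkerψ : LinearMap.range todaD1.mulVecLin = LinearMap.ker ψ := by
      ext v
      simp only [LinearMap.mem_range, LinearMap.mem_ker, hψ, LinearMap.comp_apply]
      constructor
      · rintro ⟨x, hx⟩
        have hx' : todaD1.mulVec x = v := hx
        show matC.mulVec v 3 = 0
        rw [← hx', Matrix.mulVec_mulVec, hCD1, ← Matrix.mulVec_mulVec]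
        exact e1v3 _
      · intro h
        have h3 : matC.mulVec v 3 = 0 := h
        set y := matC.mulVec v with hy
        refine ⟨matAinv.mulVec ![0,0,0,0,0,0,0,0,0, y 0, y 1, y 2], ?_⟩
        show todaD1.mulVec _ = v
        rw [hD1v, cancelA, hE1v]
        have hvec : (![(![0,0,0,0,0,0,0,0,0, y 0, y 1, y 2] : Fin 12 → ℤ) 9,
            (![0,0,0,0,0,0,0,0,0, y 0, y 1, y 2] : Fin 12 → ℤ) 10,
            (![0,0,0,0,0,0,0,0,0, y 0, y 1, y 2] : Fin 12 → ℤ) 11, 0] : Fin 4 → ℤ) = y := by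
          funext i
          fin_cases i
          · rfl
          · rfl
          · rfl
          · exact h3.symm
        rw [hvec, hy, cancelC']
    have hsurjψ : Function.Surjective ψ := by
      intro t
      refine ⟨matCinv.mulVec ![0,0,0,t], ?_⟩
      show matC.mulVec (matCinv.mulVec ![0,0,0,t]) 3 = t
      rw [cancelC]
      rfl
    exact ⟨(Submodule.quotEquivOfEq _ _ hkerψ).trans (ψ.quotKerEquivOfSurjective hsurjψ)⟩
end
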